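/- A ring R is feckly clean if and only if for any two distinct maximal ideals M and N of R, there exists an element e ∈ R such that e ∈ M, 1-e ∈ N and eR(1-e) ⊆ J(R). -/

import Mathlib

def IsMaxTwoSided {R : Type*} [Ring R] (P : TwoSidedIdeal R) : Prop :=
  P ≠ ⊤ ∧ ∀ Q : TwoSidedIdeal R, P < Q → Q = ⊤

def InJac {R : Type*} [Ring R] (x : R) : Prop := x ∈ Ideal.jacobson (⊥ : Ideal R)

def IsFullElem {R : Type*} [Ring R] (u : R) : Prop := TwoSidedIdeal.span ({u} : Set R) = ⊤

def FecklyCleanElem {R : Type*} [Ring R] (a : R) : Prop :=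
  ∃ e u : R, a = e + u ∧ IsFullElem u ∧ ∀ r : R, InJac (e * r * (1 - e))

def FecklyCleanRing (R : Type*) [Ring R] : Prop := ∀ a : R, FecklyCleanElem a

/-!
If `e R (1 - e) ⊆ J(R)`, then `e R (1 - e)` lies in every maximal ideal, and since maximal
two-sided ideals are prime, every maximal ideal contains `e` or `1 - e`. Such elements thus cut
`Max R` into two clopen pieces, and they are closed under `e f` and `e + f - e f`.

If `R` is feckly clean and `1 = m + n` with `m ∈ M`, `n ∈ N`, write `n = e + u` with `u` full;
as `u` lies in no maximal ideal, this forces `e ∈ M` and `1 - e ∈ N`. Conversely, if such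
elements separate any two maximal ideals, compactness of `Max R`, used twice (a point against a
closed set, then two disjoint closed sets), yields an `e` with `1 - e` in every maximal ideal
containing `a` and `e` in every maximal ideal containing `1 - a`. Then `a - e` lies in no
maximal ideal, i.e. it is full.
-/

open CompleteLattice

namespace TwoSidedIdeal
variable {R : Type*} [Ring R]

lemma exists_mem_of_mem_sSup_of_directedOn {s : Set (TwoSidedIdeal R)} (hne : s.Nonempty)
    (hdir : DirectedOn (· ≤ ·) s) {x : R} (hx : x ∈ sSup s) : ∃ I ∈ s, x ∈ I := by
  let U : TwoSidedIdeal R := .mk' (⋃ I ∈ s, (I : Set R))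
    (Set.mem_biUnion hne.some_mem (zero_mem _))
    (fun hx hy => by
      obtain ⟨I, hI, hxI⟩ := Set.mem_iUnion₂.mp hx
      obtain ⟨I', hI', hyI'⟩ := Set.mem_iUnion₂.mp hy
      obtain ⟨K, hK, hIK, hI'K⟩ := hdir I hI I' hI'
      exact Set.mem_biUnion hK (K.add_mem (hIK hxI) (hI'K hyI')))
    (fun hx => by
      obtain ⟨I, hI, hxI⟩ := Set.mem_iUnion₂.mp hx
      exact Set.mem_biUnion hI (I.neg_mem hxI))
    (fun hy => by
      obtain ⟨I, hI, hyI⟩ := Set.mem_iUnion₂.mp hy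
      exact Set.mem_biUnion hI (I.mul_mem_left _ _ hyI))
    (fun hx => by
      obtain ⟨I, hI, hxI⟩ := Set.mem_iUnion₂.mp hx
      exact Set.mem_biUnion hI (I.mul_mem_right _ _ hxI))
  have hle : sSup s ≤ U := sSup_le fun I hI x hx => by
    simpa [U] using ⟨I, hI, hx⟩
  simpa [U] using hle hx

lemma isCompactElement_top : IsCompactElement (⊤ : TwoSidedIdeal R) := by
  rw [isCompactElement_iff_le_of_directed_sSup_le]
  intro s hne hdir htop
  obtain ⟨I, hI, h1⟩ := exists_mem_of_mem_sSup_of_directedOn hne hdir (htop (mem_top R))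
  exact ⟨I, hI, (I.one_mem_iff.mp h1).ge⟩

instance : IsCoatomic (TwoSidedIdeal R) := coatomic_of_top_compact isCompactElement_top

lemma exists_finset_subset_one_mem_span {s : Set R} (h : (1 : R) ∈ span s) :
    ∃ F : Finset R, ↑F ⊆ s ∧ (1 : R) ∈ span (F : Set R) := by
  have hle : ⊤ ≤ ⨆ x : s, span {(x : R)} := by
    rw [top_le_iff, ← one_mem_iff]
    refine span_le.mpr (fun x hx => ?_) h
    exact le_iSup (fun x : s => span {(x : R)}) ⟨x, hx⟩ (subset_span rfl)
  obtain ⟨F, hF⟩ := IsCompactElement.exists_finset_of_le_iSup _ isCompactElement_top _ hle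
  refine ⟨F.map (.subtype _), by simp, ?_⟩
  have hF' : (⨆ x ∈ F, span {(x : R)}) ≤ span (F.map (.subtype _) : Set R) :=
    iSup₂_le fun x hx => span_mono (by simpa using hx)
  exact hF' (hF (mem_top R))

end TwoSidedIdeal

open TwoSidedIdeal

section Maximal
variable {R : Type*} [Ring R] {M : TwoSidedIdeal R}

lemma exists_isMaxTwoSided_le {I : TwoSidedIdeal R} (hI : I ≠ ⊤) :
    ∃ M, IsMaxTwoSided M ∧ I ≤ M :=
  (eq_top_or_exists_le_coatom I).resolve_left hI

lemma IsMaxTwoSided.sup_eq_top {N : TwoSidedIdeal R} (hM : IsMaxTwoSided M)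
    (hN : IsMaxTwoSided N) (hMN : M ≠ N) : M ⊔ N = ⊤ :=
  IsCoatom.sup_eq_top_of_ne hM hN hMN

lemma IsMaxTwoSided.notMem_of_one_sub_mem (hM : IsMaxTwoSided M) {x : R} (hx : 1 - x ∈ M) :
    x ∉ M := fun h => hM.1 ((one_mem_iff M).mp (by simpa using M.add_mem hx h))

lemma IsMaxTwoSided.mem_or_mem (hM : IsMaxTwoSided M) {e f : R} (h : ∀ r, e * r * f ∈ M) :
    e ∈ M ∨ f ∈ M := by
  refine or_iff_not_imp_right.mpr fun hf => ?_
  let A : TwoSidedIdeal R := .mk' {x | ∀ r, e * r * x ∈ M} (fun r => by simp)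
    (fun hx hy r => by simpa [mul_add] using M.add_mem (hx r) (hy r))
    (fun hx r => by simpa using M.neg_mem (hx r))
    (fun {x y} hy r => by simpa [mul_assoc] using hy (r * x))
    (fun {x y} hx r => by simpa [mul_assoc] using M.mul_mem_right _ y (hx r))
  have hMA : M < A := lt_of_le_of_ne (fun x hx r => by simpa [A] using M.mul_mem_left _ _ hx)
    fun hMA => hf (hMA ▸ (show f ∈ A by simpa [A] using h))
  simpa [A] using (one_mem_iff A).mpr (hM.2 A hMA) 1

lemma inJac_iff_mem_jacobson {x : R} : InJac x ↔ x ∈ jacobson (⊥ : TwoSidedIdeal R) := by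
  simp [InJac, TwoSidedIdeal.jacobson]

lemma IsMaxTwoSided.jacobson_bot_le (hM : IsMaxTwoSided M) : jacobson ⊥ ≤ M := by
  by_contra h
  obtain ⟨m, hm, j, hj, hmj⟩ := mem_sup.mp <| (one_mem_iff _).mpr <|
    hM.2 _ (lt_of_le_of_ne le_sup_left fun h' => h (h' ▸ le_sup_right))
  have hm1 : m - 1 ∈ Ideal.jacobson (⊥ : Ideal R) := by
    have hj' : j ∈ Ideal.jacobson (⊥ : Ideal R) := inJac_iff_mem_jacobson.mpr hj
    rw [← hmj, sub_add_cancel_left]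
    exact Submodule.neg_mem _ hj'
  obtain ⟨z, hz⟩ := Ideal.exists_mul_sub_mem_of_sub_one_mem_jacobson m hm1
  rw [Ideal.mem_bot, sub_eq_zero] at hz
  exact hM.1 ((one_mem_iff M).mp (hz ▸ M.mul_mem_left z m hm))

lemma isFullElem_iff {u : R} :
    IsFullElem u ↔ ∀ M : TwoSidedIdeal R, IsMaxTwoSided M → u ∉ M := by
  refine ⟨fun hu M hM huM => hM.1 (top_le_iff.mp (hu ▸ span_le.mpr (by simpa using huM))),
    fun h => by_contra fun hu => ?_⟩
  obtain ⟨M, hM, hle⟩ := exists_isMaxTwoSided_le hu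
  exact h M hM (hle (subset_span rfl))

end Maximal

section Semicentral
variable {R : Type*} [Ring R] {K : TwoSidedIdeal R}

def IsSemicentralMod (K : TwoSidedIdeal R) (e : R) : Prop := ∀ r, e * r * (1 - e) ∈ K

lemma isSemicentralMod_zero : IsSemicentralMod K 0 := fun r => by simp

lemma isSemicentralMod_one : IsSemicentralMod K 1 := fun r => by simp

lemma IsSemicentralMod.mul {x y : R} (hx : IsSemicentralMod K x) (hy : IsSemicentralMod K y) :
    IsSemicentralMod K (x * y) := fun r => by
  have h : x * y * r * (1 - x * y) = x * (y * r) * (1 - x) + x * (y * (r * x) * (1 - y)) := by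
    noncomm_ring
  exact h ▸ K.add_mem (hx _) (K.mul_mem_left _ _ (hy _))

lemma IsSemicentralMod.add_sub_mul {x y : R} (hx : IsSemicentralMod K x)
    (hy : IsSemicentralMod K y) : IsSemicentralMod K (x + y - x * y) := fun r => by
  have h : (x + y - x * y) * r * (1 - (x + y - x * y))
      = x * r * (1 - x) * (1 - y) + (1 - x) * (y * (r * (1 - x)) * (1 - y)) := by
    noncomm_ring
  exact h ▸ K.add_mem (K.mul_mem_right _ _ (hx r)) (K.mul_mem_left _ _ (hy _))

lemma IsSemicentralMod.mem_or_one_sub_mem {M : TwoSidedIdeal R} {e : R}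
    (he : IsSemicentralMod K e) (hM : IsMaxTwoSided M) (hKM : K ≤ M) : e ∈ M ∨ 1 - e ∈ M :=
  hM.mem_or_mem fun r => hKM (he r)

lemma isSemicentralMod_jacobson_iff {e : R} :
    IsSemicentralMod (jacobson ⊥) e ↔ ∀ r, InJac (e * r * (1 - e)) := by
  simp only [IsSemicentralMod, inJac_iff_mem_jacobson]

end Semicentral

section Separation
variable {R : Type*} [Ring R] {p : R → Prop}

lemma exists_one_sub_mem_of_finset (hp0 : p 0) (hp : ∀ x y, p x → p y → p (x + y - x * y))
    (I : TwoSidedIdeal R) (F : Finset R) (hF : ∀ x ∈ F, p x ∧ x ∈ I) :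
    ∃ f, p f ∧ f ∈ I ∧ ∀ P : TwoSidedIdeal R, (∃ x ∈ F, 1 - x ∈ P) → 1 - f ∈ P := by
  classical
  induction F using Finset.induction_on with
  | empty => exact ⟨0, hp0, I.zero_mem, by simp⟩
  | insert x F _ ih =>
    obtain ⟨f, hpf, hfI, hf⟩ := ih fun y hy => hF y (Finset.mem_insert_of_mem hy)
    obtain ⟨hpx, hxI⟩ := hF x (Finset.mem_insert_self x F)
    refine ⟨x + f - x * f, hp x f hpx hpf, I.sub_mem (I.add_mem hxI hfI) (I.mul_mem_right _ _ hxI),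
      fun P hP => ?_⟩
    have h : 1 - (x + f - x * f) = (1 - x) * (1 - f) := by noncomm_ring
    rw [h]
    obtain ⟨y, hy, hyP⟩ := hP
    rcases Finset.mem_insert.mp hy with rfl | hyF
    · exact P.mul_mem_right _ _ hyP
    · exact P.mul_mem_left _ _ (hf P ⟨y, hyF, hyP⟩)

/-- By compactness of `Max R`, finitely many of the given `g` already avoid, between them, every
maximal ideal containing `b`; combining them with `x + y - x y` gives the single `g`. -/
lemma exists_one_sub_mem_of_forall_notMem (hp0 : p 0)
    (hp : ∀ x y, p x → p y → p (x + y - x * y))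
    (hdich : ∀ x, p x → ∀ P : TwoSidedIdeal R, IsMaxTwoSided P → x ∈ P ∨ 1 - x ∈ P)
    (I : TwoSidedIdeal R) (b : R)
    (h : ∀ P : TwoSidedIdeal R, IsMaxTwoSided P → b ∈ P → ∃ g, p g ∧ g ∈ I ∧ g ∉ P) :
    ∃ g, p g ∧ g ∈ I ∧ ∀ P : TwoSidedIdeal R, IsMaxTwoSided P → b ∈ P → 1 - g ∈ P := by
  classical
  have hspan : (1 : R) ∈ span (insert b {g | p g ∧ g ∈ I}) := by
    refine (one_mem_iff _).mpr (by_contra fun htop => ?_)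
    obtain ⟨P, hP, hle⟩ := exists_isMaxTwoSided_le htop
    obtain ⟨g, hpg, hgI, hgP⟩ := h P hP (hle (subset_span (Set.mem_insert b _)))
    exact hgP (hle (subset_span (Set.mem_insert_of_mem b ⟨hpg, hgI⟩)))
  obtain ⟨F, hFsub, hF1⟩ := exists_finset_subset_one_mem_span hspan
  obtain ⟨f, hpf, hfI, hf⟩ := exists_one_sub_mem_of_finset hp0 hp I (F.erase b) fun x hx =>
    (hFsub (Finset.mem_of_mem_erase hx)).resolve_left (Finset.ne_of_mem_erase hx)
  refine ⟨f, hpf, hfI, fun P hP hbP => hf P ?_⟩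
  by_contra! hFP
  refine hP.1 ((one_mem_iff P).mp (span_le.mpr (fun x hx => ?_) hF1))
  by_cases hxb : x = b
  · exact hxb ▸ hbP
  · have hx' : x ∈ F.erase b := Finset.mem_erase.mpr ⟨hxb, hx⟩
    exact ((hdich x (hFsub hx |>.resolve_left hxb).1 P hP).resolve_right (hFP x hx'))

end Separation

section FecklyClean
variable {R : Type*} [Ring R] {K : TwoSidedIdeal R}

lemma isFullElem_sub {a e : R} (he : ∀ P, IsMaxTwoSided P → e ∈ P ∨ 1 - e ∈ P)
    (ha : ∀ P, IsMaxTwoSided P → a ∈ P → 1 - e ∈ P)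
    (ha' : ∀ P, IsMaxTwoSided P → 1 - a ∈ P → e ∈ P) : IsFullElem (a - e) := by
  refine isFullElem_iff.mpr fun P hP hP' => ?_
  rcases he P hP with heP | heP
  · exact hP.notMem_of_one_sub_mem (ha P hP (by simpa using P.add_mem hP' heP)) heP
  · exact hP.notMem_of_one_sub_mem heP (ha' P hP (by simpa using P.sub_mem heP hP'))

lemma exists_separating_of_fecklyCleanRing (hR : FecklyCleanRing R) {M N : TwoSidedIdeal R}
    (hM : IsMaxTwoSided M) (hN : IsMaxTwoSided N) (hMN : M ≠ N) :
    ∃ e : R, e ∈ M ∧ 1 - e ∈ N ∧ ∀ r : R, InJac (e * r * (1 - e)) := by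
  obtain ⟨m, hm, n, hn, hmn⟩ := mem_sup.mp ((one_mem_iff _).mpr (hM.sup_eq_top hN hMN))
  obtain ⟨e, u, rfl, hu, he⟩ := hR n
  have he' := isSemicentralMod_jacobson_iff.mpr he
  rw [isFullElem_iff] at hu
  refine ⟨e, ?_, ?_, he⟩
  · refine (he'.mem_or_one_sub_mem hM hM.jacobson_bot_le).resolve_right fun h1e => hu M hM ?_
    have hu : u = 1 - e - m := by rw [← hmn]; abel
    exact hu ▸ M.sub_mem h1e hm
  · refine (he'.mem_or_one_sub_mem hN hN.jacobson_bot_le).resolve_left fun heN => hu N hN ?_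
    simpa using N.sub_mem hn heN

lemma exists_isSemicentralMod_mem_of_one_sub_mem (hK : ∀ P, IsMaxTwoSided P → K ≤ P)
    (H : ∀ M N : TwoSidedIdeal R, IsMaxTwoSided M → IsMaxTwoSided N → M ≠ N →
      ∃ e, e ∈ M ∧ 1 - e ∈ N ∧ IsSemicentralMod K e)
    {a : R} {N : TwoSidedIdeal R} (hN : IsMaxTwoSided N) (haN : 1 - a ∈ N) :
    ∃ f, IsSemicentralMod K f ∧ f ∈ N ∧ ∀ M, IsMaxTwoSided M → a ∈ M → 1 - f ∈ M := by
  refine exists_one_sub_mem_of_forall_notMem isSemicentralMod_zero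
    (fun _ _ => .add_sub_mul) (fun e he P hP => he.mem_or_one_sub_mem hP (hK P hP)) N a
    fun M hM haM => ?_
  obtain ⟨e, heN, heM, he⟩ := H N M hN hM fun hNM => hN.notMem_of_one_sub_mem haN (hNM ▸ haM)
  exact ⟨e, he, heN, hM.notMem_of_one_sub_mem heM⟩

lemma exists_isSemicentralMod_isFullElem_sub (hK : ∀ P, IsMaxTwoSided P → K ≤ P)
    (H : ∀ M N : TwoSidedIdeal R, IsMaxTwoSided M → IsMaxTwoSided N → M ≠ N →
      ∃ e, e ∈ M ∧ 1 - e ∈ N ∧ IsSemicentralMod K e) (a : R) :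
    ∃ e, IsSemicentralMod K e ∧ IsFullElem (a - e) := by
  have hdich : ∀ e, IsSemicentralMod K e → ∀ P, IsMaxTwoSided P → e ∈ P ∨ 1 - e ∈ P :=
    fun e he P hP => he.mem_or_one_sub_mem hP (hK P hP)
  obtain ⟨g, hg, hgM, hgN⟩ := exists_one_sub_mem_of_forall_notMem
    (p := fun x => IsSemicentralMod K (1 - x)) (by simpa using isSemicentralMod_one)
    (fun x y hx hy => by
      have h : 1 - (x + y - x * y) = (1 - x) * (1 - y) := by noncomm_ring
      simpa only [h] using hx.mul hy)
    (fun x hx P hP => by simpa [or_comm] using hdich _ hx P hP)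
    (sInf {M | IsMaxTwoSided M ∧ a ∈ M}) (1 - a) fun N hN haN => by
      obtain ⟨f, hf, hfN, hfM⟩ := exists_isSemicentralMod_mem_of_one_sub_mem hK H hN haN
      exact ⟨1 - f, by simpa using hf, (mem_sInf R).mpr fun M ⟨hM, haM⟩ => hfM M hM haM,
        hN.notMem_of_one_sub_mem (by simpa using hfN)⟩
  refine ⟨1 - g, hg, isFullElem_sub (hdich _ hg) (fun P hP haP => ?_) fun P hP haP => hgN P hP haP⟩
  simpa using (mem_sInf R).mp hgM P ⟨hP, haP⟩

end FecklyClean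

theorem stmt6 {R : Type*} [Ring R] :
    FecklyCleanRing R ↔ ∀ M N : TwoSidedIdeal R, IsMaxTwoSided M → IsMaxTwoSided N → M ≠ N →
      ∃ e : R, e ∈ M ∧ 1 - e ∈ N ∧ ∀ r : R, InJac (e * r * (1 - e)) := by
  refine ⟨fun hR M N hM hN hMN => exists_separating_of_fecklyCleanRing hR hM hN hMN,
    fun H a => ?_⟩
  obtain ⟨e, he, hfull⟩ := exists_isSemicentralMod_isFullElem_sub
    (fun P hP => hP.jacobson_bot_le) (by simpa only [isSemicentralMod_jacobson_iff] using H) a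
  exact ⟨e, a - e, by abel, hfull, isSemicentralMod_jacobson_iff.mp he⟩
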